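/- arXiv:1604.04343 — 2 statements merged into one kernel-verified Lean document; each statement's English description precedes it below -/
import Mathlib

section
/- Let P be an irreducible aperiodic finite stochastic matrix with stationary distribution π and reward vector f, and let r be a row vector with r·e ≠ 0. Then the vector g = (I − P + e·r)^{-1} f satisfies the Poisson equation g = f − η e + P g, where η = π f, and additionally r·g = η. -/
open Matrix

def IsStochastic {S : ℕ} (P : Matrix (Fin S) (Fin S) ℝ) : Prop :=
  (∀ i j, 0 ≤ P i j) ∧ ∀ i, ∑ j, P i j = 1

def IsPrimitive {S : ℕ} (P : Matrix (Fin S) (Fin S) ℝ) : Prop :=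
  ∃ k : ℕ, ∀ i j, 0 < (P ^ k) i j

/-!
The matrix `A = I - P + e r` satisfies `π A = r`, because `π P = π` and `π e = 1`. Hence
`A g = f` gives `r g = π f`, and then `g - P g + (r g) e = f` is the Poisson equation. The matrix
`A` is invertible: if `A x = 0` then `r x = π A x = 0`, so `P x = x`; by the maximum principle
for the positive matrix `P^k`, `x = c e`, and `0 = r x = c (r e)` forces `c = 0`.
-/

namespace Matrix

variable {n K : Type*} [Fintype n]

theorem pow_mulVec_eq_self [DecidableEq n] [CommSemiring K] {P : Matrix n n K} {x : n → K}
    (hx : P *ᵥ x = x) (k : ℕ) : (P ^ k) *ᵥ x = x := by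
  induction k with
  | zero => exact one_mulVec x
  | succ k ih => rw [pow_succ, ← mulVec_mulVec, hx, ih]

/-- Maximum principle: at a maximum `i` of `x`, the `Q`-weighted average of the nonnegative
numbers `x i - x j` is `0`. -/
theorem eq_smul_one_of_mulVec_eq_self_of_pos [Field K] [LinearOrder K] [IsStrictOrderedRing K]
    {Q : Matrix n n K} (hpos : ∀ i j, 0 < Q i j) (hrow : Q *ᵥ 1 = 1) {x : n → K}
    (hx : Q *ᵥ x = x) : ∃ c : K, x = c • 1 := by
  cases isEmpty_or_nonempty n
  · exact ⟨0, Subsingleton.elim _ _⟩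
  obtain ⟨i, hi⟩ := Finite.exists_max x
  refine ⟨x i, funext fun l => ?_⟩
  have hmean : Q *ᵥ (x i • 1 - x) = x i • 1 - x := by
    rw [mulVec_sub, mulVec_smul, hrow, hx]
  have hsum : ∑ j, Q i j * (x i - x j) = 0 := by
    simpa [mulVec, dotProduct] using congrFun hmean i
  have hterm := (Finset.sum_eq_zero_iff_of_nonneg fun j _ =>
    mul_nonneg (hpos i j).le (sub_nonneg.mpr (hi j))).mp hsum l (Finset.mem_univ l)
  simpa [sub_eq_zero, (hpos i l).ne', eq_comm] using hterm

theorem vecMul_one_sub_add_vecMulVec [DecidableEq n] [CommRing K] {P : Matrix n n K} {π e : n → K}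
    (hπP : π ᵥ* P = π) (hπe : π ⬝ᵥ e = 1) (r : n → K) :
    π ᵥ* (1 - P + vecMulVec e r) = r := by
  rw [vecMul_add, vecMul_sub, vecMul_one, hπP, vecMul_vecMulVec, hπe, sub_self, one_smul,
    zero_add]

theorem one_sub_add_vecMulVec_mulVec [DecidableEq n] [CommRing K] (P : Matrix n n K) (e r x : n → K) :
    (1 - P + vecMulVec e r) *ᵥ x = x - P *ᵥ x + (r ⬝ᵥ x) • e := by
  rw [add_mulVec, sub_mulVec, one_mulVec, vecMulVec_mulVec, op_smul_eq_smul]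

theorem isUnit_one_sub_add_vecMulVec [DecidableEq n] [Field K] {P : Matrix n n K} {π e r : n → K}
    (hπP : π ᵥ* P = π) (hπe : π ⬝ᵥ e = 1) (hre : r ⬝ᵥ e ≠ 0)
    (hharm : ∀ x, P *ᵥ x = x → ∃ c : K, x = c • e) :
    IsUnit (1 - P + vecMulVec e r) := by
  rw [isUnit_iff_isUnit_det, isUnit_iff_ne_zero, ne_eq, ← exists_mulVec_eq_zero_iff]
  rintro ⟨x, hx0, hAx⟩
  have hrx : r ⬝ᵥ x = 0 := by
    rw [← vecMul_one_sub_add_vecMulVec hπP hπe r, ← dotProduct_mulVec, hAx, dotProduct_zero]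
  rw [one_sub_add_vecMulVec_mulVec, hrx, zero_smul, add_zero, sub_eq_zero] at hAx
  obtain ⟨c, rfl⟩ := hharm x hAx.symm
  rw [dotProduct_smul, smul_eq_mul, mul_eq_zero] at hrx
  exact hx0 (by rw [hrx.resolve_right hre, zero_smul])

end Matrix

theorem IsPrimitive.eq_smul_one_of_mulVec_eq_self {S : ℕ} {P : Matrix (Fin S) (Fin S) ℝ}
    (hst : IsStochastic P) (hprim : _root_.IsPrimitive P) {x : Fin S → ℝ}
    (hx : P *ᵥ x = x) : ∃ c : ℝ, x = c • 1 := by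
  obtain ⟨k, hk⟩ := hprim
  have hrow : P *ᵥ 1 = 1 := funext fun i => by simpa [mulVec, dotProduct] using hst.2 i
  exact eq_smul_one_of_mulVec_eq_self_of_pos hk (pow_mulVec_eq_self hrow k)
    (pow_mulVec_eq_self hx k)

theorem potential_via_generalized_fundamental_general
    {S : ℕ} (P : Matrix (Fin S) (Fin S) ℝ)
    (hst : IsStochastic P) (hprim : _root_.IsPrimitive P)
    (π : Fin S → ℝ) (e : Fin S → ℝ) (he : e = fun _ => 1)
    (hπP : π ᵥ* P = π) (hπe : π ⬝ᵥ e = 1)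
    (f : Fin S → ℝ) (r : Fin S → ℝ) (hre : r ⬝ᵥ e ≠ 0)
    (g : Fin S → ℝ) (hg : g = (1 - P + vecMulVec e r)⁻¹ *ᵥ f) :
    g = f - (π ⬝ᵥ f) • e + P *ᵥ g ∧ r ⬝ᵥ g = π ⬝ᵥ f := by
  subst he
  have hA : IsUnit (1 - P + vecMulVec (fun _ => 1) r).det :=
    (isUnit_iff_isUnit_det _).mp <| isUnit_one_sub_add_vecMulVec hπP hπe hre
      fun _ hx => hprim.eq_smul_one_of_mulVec_eq_self hst hx
  have hAg : g - P *ᵥ g + (r ⬝ᵥ g) • (fun _ => 1) = f := by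
    rw [← one_sub_add_vecMulVec_mulVec, hg, mulVec_mulVec, mul_nonsing_inv _ hA, one_mulVec]
  have hrg : r ⬝ᵥ g = π ⬝ᵥ f := by
    rw [← vecMul_one_sub_add_vecMulVec hπP hπe r, ← dotProduct_mulVec,
      one_sub_add_vecMulVec_mulVec, hAg]
  refine ⟨?_, hrg⟩
  rw [← hrg, ← hAg]
  abel

/-- The vector `g = (I − P + e·r)⁻¹ f` satisfies the Poisson equation
`g = f − η e + P g` with `η = π f`, and moreover `r·g = η`. -/
theorem potential_via_generalized_fundamental
    {S : ℕ} (hS : 0 < S) (P : Matrix (Fin S) (Fin S) ℝ)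
    (hst : IsStochastic P) (hprim : _root_.IsPrimitive P)
    (π : Fin S → ℝ) (e : Fin S → ℝ) (he : e = fun _ => 1)
    (hπP : π ᵥ* P = π) (hπe : π ⬝ᵥ e = 1)
    (f : Fin S → ℝ) (r : Fin S → ℝ) (hre : r ⬝ᵥ e ≠ 0)
    (g : Fin S → ℝ) (hg : g = (1 - P + vecMulVec e r)⁻¹ *ᵥ f) :
    g = f - (π ⬝ᵥ f) • e + P *ᵥ g ∧ r ⬝ᵥ g = π ⬝ᵥ f :=
  potential_via_generalized_fundamental_general P hst hprim π e he hπP hπe f r hre g hg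
end

section
/- Let B be the generator matrix of an ergodic finite continuous-time Markov process and r a row vector with r·e ≠ 0. Then the matrix B + e·r is invertible. -/
/-!
If `(B + e r) v = 0` then `B v = -(r v) e`. At a maximum and at a minimum of `v` the entries of
`B v` are respectively `≤ 0` and `≥ 0`, because `B` has nonnegative off-diagonal entries and zero
row sums; hence `r v = 0` and `B v = 0`. Then `v` is fixed by every power of `1 + γ⁻¹ B`, a
matrix with unit row sums of which some power is entrywise positive, so averaging at a maximum
of `v` shows that `v` is constant. Finally `r v = 0` and `r e ≠ 0` force that constant to be `0`.
-/

open Matrix Finset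

namespace Matrix

theorem pow_mulVec_eq_self_s16 {ι α : Type*} [Fintype ι] [DecidableEq ι] [Semiring α]
    {M : Matrix ι ι α} {v : ι → α} (hv : M *ᵥ v = v) (k : ℕ) : (M ^ k) *ᵥ v = v := by
  induction k with
  | zero => simp
  | succ k ih => rw [pow_succ, ← mulVec_mulVec, hv, ih]

variable {ι R : Type*} [Fintype ι] [CommRing R] [LinearOrder R] [IsStrictOrderedRing R]

theorem mulVec_apply_nonpos_of_forall_le {B : Matrix ι ι R}
    (hoff : ∀ i j, i ≠ j → 0 ≤ B i j) (hB1 : B *ᵥ 1 = 0) {v : ι → R} {i : ι}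
    (hi : ∀ j, v j ≤ v i) : (B *ᵥ v) i ≤ 0 := by
  have hrow : ∑ j, B i j = 0 := by simpa [mulVec, dotProduct] using congrFun hB1 i
  calc (B *ᵥ v) i = ∑ j, B i j * (v j - v i) := by
        simp [mulVec, dotProduct, mul_sub, sum_sub_distrib, ← sum_mul, hrow]
    _ ≤ 0 := sum_nonpos fun j _ => by
        rcases eq_or_ne i j with rfl | hij
        · simp
        · exact mul_nonpos_of_nonneg_of_nonpos (hoff i j hij) (sub_nonpos.2 (hi j))

theorem eq_zero_of_mulVec_eq_smul_one [Nonempty ι] {B : Matrix ι ι R}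
    (hoff : ∀ i j, i ≠ j → 0 ≤ B i j) (hB1 : B *ᵥ 1 = 0) {v : ι → R} {c : R}
    (hv : B *ᵥ v = c • 1) : c = 0 := by
  obtain ⟨imax, -, himax⟩ := exists_max_image univ v univ_nonempty
  obtain ⟨imin, -, himin⟩ := exists_min_image univ v univ_nonempty
  have hc_nonpos := mulVec_apply_nonpos_of_forall_le hoff hB1 fun j => himax j (mem_univ j)
  have hc_nonneg := mulVec_apply_nonpos_of_forall_le hoff hB1 (v := -v) (i := imin)
    fun j => neg_le_neg (himin j (mem_univ j))
  rw [hv] at hc_nonpos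
  rw [mulVec_neg, hv] at hc_nonneg
  simp only [Pi.smul_apply, Pi.one_apply, smul_eq_mul, mul_one, Pi.neg_apply,
    neg_nonpos] at hc_nonpos hc_nonneg
  exact le_antisymm hc_nonpos hc_nonneg

theorem eq_of_mulVec_eq_self {M : Matrix ι ι R} (hpos : ∀ i j, 0 < M i j) (hM1 : M *ᵥ 1 = 1)
    {v : ι → R} (hv : M *ᵥ v = v) (i j : ι) : v i = v j := by
  obtain ⟨m, -, hm⟩ := exists_max_image univ v ⟨i, mem_univ i⟩
  have hrow : ∑ k, M m k = 1 := by simpa [mulVec, dotProduct] using congrFun hM1 m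
  have hmean : ∑ k, M m k * v k = v m := congrFun hv m
  have hsum : ∑ k, M m k * (v m - v k) = 0 := by
    simp [mul_sub, sum_sub_distrib, ← sum_mul, hrow, hmean]
  have heq_max (k : ι) : v k = v m := by
    have hterm := (sum_eq_zero_iff_of_nonneg fun k _ =>
      mul_nonneg (hpos m k).le (sub_nonneg.2 (hm k (mem_univ k)))).1 hsum k (mem_univ k)
    exact (sub_eq_zero.1 ((mul_eq_zero.1 hterm).resolve_left (hpos m k).ne')).symm
  rw [heq_max i, heq_max j]

theorem eq_of_mulVec_eq_zero [DecidableEq ι] {B : Matrix ι ι R} (hB1 : B *ᵥ 1 = 0) {t : R}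
    (hprim : ∃ k : ℕ, ∀ i j, 0 < ((1 + t • B) ^ k) i j) {v : ι → R} (hv : B *ᵥ v = 0)
    (i j : ι) : v i = v j := by
  have fixed {w : ι → R} (hw : B *ᵥ w = 0) : (1 + t • B) *ᵥ w = w := by
    rw [add_mulVec, one_mulVec, smul_mulVec, hw, smul_zero, add_zero]
  obtain ⟨k, hk⟩ := hprim
  exact eq_of_mulVec_eq_self hk (pow_mulVec_eq_self_s16 (fixed hB1) k)
    (pow_mulVec_eq_self_s16 (fixed hv) k) i j

end Matrix

theorem generator_rank_one_update_invertible_general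
    {S : ℕ} (hS : 0 < S) (B : Matrix (Fin S) (Fin S) ℝ)
    (hoff : ∀ i j, i ≠ j → 0 ≤ B i j)
    (e : Fin S → ℝ) (he : e = fun _ => 1)
    (hBe : B *ᵥ e = 0)
    (γ : ℝ)
    (hprim : ∃ k : ℕ, ∀ i j, 0 < ((1 + γ⁻¹ • B) ^ k) i j)
    (r : Fin S → ℝ) (hre : r ⬝ᵥ e ≠ 0) :
    IsUnit (B + vecMulVec e r) := by
  obtain rfl : e = 1 := he
  have : Nonempty (Fin S) := ⟨⟨0, hS⟩⟩
  rw [isUnit_iff_isUnit_det, isUnit_iff_ne_zero, ne_eq, ← exists_mulVec_eq_zero_iff]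
  rintro ⟨v, hv0, hv⟩
  have hBv : B *ᵥ v = -(r ⬝ᵥ v) • 1 := by
    rw [add_mulVec, vecMulVec_mulVec, add_eq_zero_iff_eq_neg] at hv
    rw [hv, op_smul_eq_smul, neg_smul]
  have hrv : r ⬝ᵥ v = 0 := neg_eq_zero.1 (eq_zero_of_mulVec_eq_smul_one hoff hBe hBv)
  rw [hrv, neg_zero, zero_smul] at hBv
  have hv_const : v = v ⟨0, hS⟩ • 1 :=
    funext fun j => by simp [eq_of_mulVec_eq_zero hBe hprim hBv j ⟨0, hS⟩]
  have hdot : v ⟨0, hS⟩ * (r ⬝ᵥ 1) = 0 := by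
    rw [← smul_eq_mul, ← dotProduct_smul, ← hv_const, hrv]
  rw [hv_const, (mul_eq_zero.1 hdot).resolve_right hre, zero_smul] at hv0
  exact hv0 rfl

/-- For the generator `B` of an ergodic finite continuous-time Markov process
and a row vector `r` with `r·e ≠ 0`, the matrix `B + e·r` is invertible. -/
theorem generator_rank_one_update_invertible
    {S : ℕ} (hS : 0 < S) (B : Matrix (Fin S) (Fin S) ℝ)
    (hoff : ∀ i j, i ≠ j → 0 ≤ B i j)
    (e : Fin S → ℝ) (he : e = fun _ => 1)
    (hBe : B *ᵥ e = 0)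
    (γ : ℝ) (hγpos : 0 < γ) (hγ : ∀ s, |B s s| ≤ γ)
    (hprim : ∃ k : ℕ, ∀ i j, 0 < ((1 + γ⁻¹ • B) ^ k) i j)
    (r : Fin S → ℝ) (hre : r ⬝ᵥ e ≠ 0) :
    IsUnit (B + vecMulVec e r) :=
  generator_rank_one_update_invertible_general hS B hoff e he hBe γ hprim r hre
end
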